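/- arXiv:1810.03423 — 3 statements merged into one kernel-verified Lean document; each statement's English description precedes it below -/
import Mathlib

section
/- Let Θ₁, Θ₂, Λ be frames of a family of compatible frames with Θ₁ ⊥ Θ₂ | Λ, and let q₁, q₂ be probability potentials with d(q₁) = Θ₁ ∨ Λ and d(q₂) = Θ₂ ∨ Λ (so q₁ and q₂ are conditionally independent given Λ). Then: (1) π_{Θ₁∨Λ}(q₁ · q₂) = q₁ · π_Λ(q₂) and π_{Θ₂∨Λ}(q₁ · q₂) = q₂ · π_Λ(q₁); (2) π_Λ(q₁ · q₂) = π_Λ(q₁) · π_Λ(q₂). -/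
open scoped NNReal

/-- A family of compatible frames (f.c.f.): a collection of finite nonempty frames
together with (unique) refinings between them, closed under composition, containing
identities, with minimal common refinements (binary joins). -/
structure FCF where
  /-- the frames of the family -/
  Frame : Type
  /-- the elements of each frame -/
  El : Frame → Type
  elFintype : ∀ Θ, Fintype (El Θ)
  elNonempty : ∀ Θ, Nonempty (El Θ)
  /-- `le Θ Λ` holds iff the family contains a refining of `Θ` to `Λ`. -/
  le : Frame → Frame → Prop
  le_refl : ∀ Θ, le Θ Θ
  le_trans : ∀ {Θ Λ Ξ}, le Θ Λ → le Λ Ξ → le Θ Ξ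
  le_antisymm : ∀ {Θ Λ}, le Θ Λ → le Λ Θ → Θ = Λ
  /-- the (unique) refining map of `Θ` to `Λ`, when `le Θ Λ` -/
  τ : ∀ {Θ Λ}, le Θ Λ → El Θ → Set (El Λ)
  τ_nonempty : ∀ {Θ Λ} (h : le Θ Λ) (θ : El Θ), (τ h θ).Nonempty
  τ_disjoint : ∀ {Θ Λ} (h : le Θ Λ) (θ θ' : El Θ), θ ≠ θ' → τ h θ ∩ τ h θ' = ∅
  τ_cover : ∀ {Θ Λ} (h : le Θ Λ) (x : El Λ), ∃ θ, x ∈ τ h θ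
  /-- the identity refining -/
  τ_refl : ∀ {Θ} (h : le Θ Θ) (θ : El Θ), τ h θ = {θ}
  /-- closure under composition of refinings -/
  τ_comp : ∀ {Θ Λ Ξ} (h₁ : le Θ Λ) (h₂ : le Λ Ξ) (h₃ : le Θ Ξ) (θ : El Θ),
    τ h₃ θ = ⋃ lam ∈ τ h₁ θ, τ h₂ lam
  /-- identity of coarsenings: two coarsenings of a frame with the same blocks coincide -/
  coarsening_unique : ∀ {Θ₁ Θ₂ Λ} (h₁ : le Θ₁ Λ) (h₂ : le Θ₂ Λ),
    (∀ θ₁, ∃ θ₂, τ h₁ θ₁ = τ h₂ θ₂) → (∀ θ₂, ∃ θ₁, τ h₁ θ₁ = τ h₂ θ₂) → Θ₁ = Θ₂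
  /-- minimal common refinement of two frames -/
  sup : Frame → Frame → Frame
  le_sup_left : ∀ Θ Λ, le Θ (sup Θ Λ)
  le_sup_right : ∀ Θ Λ, le Λ (sup Θ Λ)
  sup_le : ∀ {Θ Λ Ξ}, le Θ Ξ → le Λ Ξ → le (sup Θ Λ) Ξ
  /-- every element of the minimal common refinement is the (unique) intersection point
  of a block of each factor -/
  sup_atom : ∀ {Θ Λ} (h₁ : le Θ (sup Θ Λ)) (h₂ : le Λ (sup Θ Λ)) (x : El (sup Θ Λ)),
    ∃ (θ : El Θ) (lam : El Λ), τ h₁ θ ∩ τ h₂ lam = {x}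

namespace FCF

instance (F : FCF) (Θ : F.Frame) : Fintype (F.El Θ) := F.elFintype Θ

instance (F : FCF) (Θ : F.Frame) : Nonempty (F.El Θ) := F.elNonempty Θ

instance instSemilatticeSup (F : FCF) : SemilatticeSup F.Frame where
  le := F.le
  le_refl := F.le_refl
  le_trans := fun _ _ _ => F.le_trans
  le_antisymm := fun _ _ => F.le_antisymm
  sup := F.sup
  le_sup_left := F.le_sup_left
  le_sup_right := F.le_sup_right
  sup_le := fun _ _ _ h h' => F.sup_le h h'

/-- the indicator potential `f_p` of the support of a potential -/
noncomputable def fpot {X : Type} (p : X → ℝ≥0) : X → ℝ≥0 := fun x =>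
  haveI := Classical.propDecidable (0 < p x)
  if 0 < p x then 1 else 0

/-- the support of a potential -/
def psupp {X : Type} (p : X → ℝ≥0) : Set X := {x | 0 < p x}

/-- the likelihood (plausibility of singletons) function of a set potential -/
noncomputable def plfn {X : Type} (m : Set X → ℝ≥0) : X → ℝ≥0 :=
  fun x => ∑ᶠ (S : Set X) (_ : x ∈ S), m S

variable (F : FCF)

/-- `θ` and `lam` are compatible: their refinings to the minimal common refinement
of the two frames intersect. -/
def compat {Θ Λ : F.Frame} (θ : F.El Θ) (lam : F.El Λ) : Prop :=
  (F.τ (F.le_sup_left Θ Λ) θ ∩ F.τ (F.le_sup_right Θ Λ) lam).Nonempty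

/-- `(θ₁, θ₂, lam) ∈ R(Θ₁, Θ₂, Λ)`: joint compatibility of a triple. -/
def compat3 {Θ₁ Θ₂ Λ : F.Frame} (θ₁ : F.El Θ₁) (θ₂ : F.El Θ₂) (lam : F.El Λ) : Prop :=
  (F.τ (F.le_trans (F.le_sup_left Θ₁ Θ₂) (F.le_sup_left (F.sup Θ₁ Θ₂) Λ)) θ₁ ∩
    F.τ (F.le_trans (F.le_sup_right Θ₁ Θ₂) (F.le_sup_left (F.sup Θ₁ Θ₂) Λ)) θ₂ ∩
    F.τ (F.le_sup_right (F.sup Θ₁ Θ₂) Λ) lam).Nonempty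

/-- `Θ₁ ⊥ Θ₂ | Λ` : conditional independence of two frames given a third,
`R_λ(Θ₁,Θ₂) = R_λ(Θ₁) × R_λ(Θ₂)` for every `λ ∈ Λ`. -/
def CondIndep (Θ₁ Θ₂ Λ : F.Frame) : Prop :=
  ∀ (lam : F.El Λ) (θ₁ : F.El Θ₁) (θ₂ : F.El Θ₂),
    F.compat3 θ₁ θ₂ lam ↔ (F.compat θ₁ lam ∧ F.compat θ₂ lam)

/-- joint compatibility of a family of elements together with `lam`. -/
def compatFam {ι : Type} {Θ : ι → F.Frame} {Λ : F.Frame}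
    (θ : ∀ i, F.El (Θ i)) (lam : F.El Λ) : Prop :=
  ∃ (Ξ : F.Frame) (hΘ : ∀ i, F.le (Θ i) Ξ) (hΛ : F.le Λ Ξ) (x : F.El Ξ),
    (∀ i, x ∈ F.τ (hΘ i) (θ i)) ∧ x ∈ F.τ hΛ lam

/-- `⊥ {Θ_i : i ∈ ι} | Λ` : conditional independence of a family of frames given `Λ`,
`R_λ(Θ₁,…,Θₙ) = R_λ(Θ₁) × ⋯ × R_λ(Θₙ)` for every `λ ∈ Λ`. -/
def CondIndepFam {ι : Type} (Θ : ι → F.Frame) (Λ : F.Frame) : Prop :=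
  ∀ (lam : F.El Λ) (θ : ∀ i, F.El (Θ i)),
    F.compatFam θ lam ↔ ∀ i, F.compat (θ i) lam

/-- `t_Λ(x)`, the unique element of the coarsening `Λ` whose block contains `x`. -/
noncomputable def proj {Λ Θ : F.Frame} (h : F.le Λ Θ) (x : F.El Θ) : F.El Λ :=
  (F.τ_cover h x).choose

/-- probability potentials on the frame `Θ` -/
abbrev Pot (Θ : F.Frame) : Type := F.El Θ → ℝ≥0

/-- the combination of two probability potentials, on the join of their domains -/
noncomputable def combine {Θ₁ Θ₂ : F.Frame} (p₁ : F.Pot Θ₁) (p₂ : F.Pot Θ₂) :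
    F.Pot (F.sup Θ₁ Θ₂) :=
  fun x => p₁ (F.proj (F.le_sup_left Θ₁ Θ₂) x) * p₂ (F.proj (F.le_sup_right Θ₁ Θ₂) x)

/-- the transport `π_Λ(p)` of a probability potential to the frame `Λ` -/
noncomputable def transport {Θ : F.Frame} (p : F.Pot Θ) (Λ : F.Frame) : F.Pot Λ :=
  fun lam => ∑ᶠ (θ : F.El Θ) (_ : F.compat θ lam), p θ

/-- the max-transport `t^max_Λ(p)` of a probability potential to the frame `Λ` -/
noncomputable def maxTransport {Θ : F.Frame} (p : F.Pot Θ) (Λ : F.Frame) : F.Pot Λ :=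
  fun lam => ⨆ (θ : F.El Θ) (_ : F.compat θ lam), p θ

/-- combination of two set potentials, on the join of their domains -/
noncomputable def setCombine {Θ₁ Θ₂ : F.Frame} (m₁ : Set (F.El Θ₁) → ℝ≥0)
    (m₂ : Set (F.El Θ₂) → ℝ≥0) : Set (F.El (F.sup Θ₁ Θ₂)) → ℝ≥0 :=
  fun S => ∑ᶠ (S₁ : Set (F.El Θ₁)) (S₂ : Set (F.El Θ₂))
    (_ : (⋃ θ ∈ S₁, F.τ (F.le_sup_left Θ₁ Θ₂) θ) ∩
         (⋃ θ ∈ S₂, F.τ (F.le_sup_right Θ₁ Θ₂) θ) = S),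
    m₁ S₁ * m₂ S₂

/-- the conditional `p_{Θ|Λ} = π_Θ(p) · (π_Λ(p))⁻¹` of `p` for `Θ` given `Λ ≤ Θ` -/
noncomputable def condl {Δ : F.Frame} (p : F.Pot Δ) {Λ Θ : F.Frame} (h : F.le Λ Θ) :
    F.Pot Θ :=
  fun θ => F.transport p Θ θ * (F.transport p Λ (F.proj h θ))⁻¹

/-- the conditional `p_{Θ|Λ} = π_{Θ∨Λ}(p) · (π_Λ(p))⁻¹` of `p` for arbitrary `Θ` given `Λ` -/
noncomputable def condl2 {Δ : F.Frame} (p : F.Pot Δ) (Θ Λ : F.Frame) :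
    F.Pot (F.sup Θ Λ) :=
  fun x => F.transport p (F.sup Θ Λ) x *
    (F.transport p Λ (F.proj (F.le_sup_right Θ Λ) x))⁻¹

/-- the solution set `s_p^Λ(lam)`: maximizers of `p` among elements compatible with `lam` -/
noncomputable def solSet {Θ : F.Frame} (p : F.Pot Θ) (Λ : F.Frame) (lam : F.El Λ) :
    Set (F.El Θ) :=
  {θ | F.compat θ lam ∧ p θ = F.maxTransport p Λ lam}

end FCF

namespace FCF

variable {F : FCF}

lemma mem_proj {Θ Λ : F.Frame} (h : F.le Θ Λ) (x : F.El Λ) :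
    x ∈ F.τ h (F.proj h x) := (F.τ_cover h x).choose_spec

lemma mem_tau_iff {Θ Λ : F.Frame} (h : F.le Θ Λ) {x : F.El Λ} {θ : F.El Θ} :
    x ∈ F.τ h θ ↔ F.proj h x = θ := by
  constructor
  · intro hx
    by_contra hne
    have h0 := F.τ_disjoint h (F.proj h x) θ hne
    have hx2 : x ∈ F.τ h (F.proj h x) ∩ F.τ h θ := ⟨mem_proj h x, hx⟩
    rw [h0] at hx2
    exact hx2
  · rintro rfl; exact mem_proj h x

lemma proj_comp {Θ Λ Ξ : F.Frame} (h₁ : F.le Θ Λ) (h₂ : F.le Λ Ξ) (h₃ : F.le Θ Ξ)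
    (x : F.El Ξ) : F.proj h₃ x = F.proj h₁ (F.proj h₂ x) := by
  rw [← mem_tau_iff h₃, F.τ_comp h₁ h₂ h₃]
  exact Set.mem_biUnion (mem_proj h₁ (F.proj h₂ x)) (mem_proj h₂ x)

lemma compat_of_le {Θ Λ : F.Frame} (h : F.le Λ Θ) (x : F.El Θ) (lam : F.El Λ) :
    F.compat x lam ↔ F.proj h x = lam := by
  constructor
  · rintro ⟨y, hy1, hy2⟩
    rw [mem_tau_iff] at hy1 hy2
    rw [← hy1, ← hy2]
    exact (proj_comp h (F.le_sup_left Θ Λ) (F.le_sup_right Θ Λ) y).symm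
  · intro hproj
    obtain ⟨y, hy⟩ := F.τ_nonempty (F.le_sup_left Θ Λ) x
    refine ⟨y, hy, ?_⟩
    rw [mem_tau_iff] at hy ⊢
    rw [proj_comp h (F.le_sup_left Θ Λ) (F.le_sup_right Θ Λ) y, hy, hproj]

lemma proj_pair_eq {Θ Λ : F.Frame} {x y : F.El (F.sup Θ Λ)}
    (h1 : F.proj (F.le_sup_left Θ Λ) x = F.proj (F.le_sup_left Θ Λ) y)
    (h2 : F.proj (F.le_sup_right Θ Λ) x = F.proj (F.le_sup_right Θ Λ) y) : x = y := by
  obtain ⟨θ, lam, hx⟩ := F.sup_atom (F.le_sup_left Θ Λ) (F.le_sup_right Θ Λ) x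
  have hxm : x ∈ F.τ (F.le_sup_left Θ Λ) θ ∩ F.τ (F.le_sup_right Θ Λ) lam := by
    rw [hx]; rfl
  have hθ : F.proj (F.le_sup_left Θ Λ) x = θ := (mem_tau_iff _).1 hxm.1
  have hlam : F.proj (F.le_sup_right Θ Λ) x = lam := (mem_tau_iff _).1 hxm.2
  have hym : y ∈ F.τ (F.le_sup_left Θ Λ) θ ∩ F.τ (F.le_sup_right Θ Λ) lam :=
    ⟨(mem_tau_iff _).2 (h1 ▸ hθ), (mem_tau_iff _).2 (h2 ▸ hlam)⟩
  rw [hx] at hym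
  exact hym.symm

lemma exists_sup_elem {Θ₁ Θ₂ Λ : F.Frame} (hCI : F.CondIndep Θ₁ Θ₂ Λ)
    (a : F.El (F.sup Θ₁ Λ)) (b : F.El (F.sup Θ₂ Λ))
    (hab : F.proj (F.le_sup_right Θ₁ Λ) a = F.proj (F.le_sup_right Θ₂ Λ) b) :
    ∃ x : F.El (F.sup (F.sup Θ₁ Λ) (F.sup Θ₂ Λ)),
      F.proj (F.le_sup_left (F.sup Θ₁ Λ) (F.sup Θ₂ Λ)) x = a ∧
      F.proj (F.le_sup_right (F.sup Θ₁ Λ) (F.sup Θ₂ Λ)) x = b := by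
  set lam := F.proj (F.le_sup_right Θ₁ Λ) a with hlam
  set θ₁ := F.proj (F.le_sup_left Θ₁ Λ) a with hθ₁
  set θ₂ := F.proj (F.le_sup_left Θ₂ Λ) b with hθ₂
  have hc₁ : F.compat θ₁ lam := ⟨a, (mem_tau_iff _).2 hθ₁.symm, (mem_tau_iff _).2 hlam.symm⟩
  have hc₂ : F.compat θ₂ lam := ⟨b, (mem_tau_iff _).2 hθ₂.symm, (mem_tau_iff _).2 hab.symm⟩
  obtain ⟨z, hz⟩ := (hCI lam θ₁ θ₂).2 ⟨hc₁, hc₂⟩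
  -- z lives in E := sup (sup Θ₁ Θ₂) Λ
  have hz₁ : F.proj (F.le_trans (F.le_sup_left Θ₁ Θ₂) (F.le_sup_left (F.sup Θ₁ Θ₂) Λ)) z = θ₁ :=
    (mem_tau_iff _).1 hz.1.1
  have hz₂ : F.proj (F.le_trans (F.le_sup_right Θ₁ Θ₂) (F.le_sup_left (F.sup Θ₁ Θ₂) Λ)) z = θ₂ :=
    (mem_tau_iff _).1 hz.1.2
  have hzΛ : F.proj (F.le_sup_right (F.sup Θ₁ Θ₂) Λ) z = lam :=
    (mem_tau_iff _).1 hz.2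
  have hΘ₁E : F.le Θ₁ (F.sup (F.sup Θ₁ Θ₂) Λ) :=
    F.le_trans (F.le_sup_left Θ₁ Θ₂) (F.le_sup_left (F.sup Θ₁ Θ₂) Λ)
  have hΘ₂E : F.le Θ₂ (F.sup (F.sup Θ₁ Θ₂) Λ) :=
    F.le_trans (F.le_sup_right Θ₁ Θ₂) (F.le_sup_left (F.sup Θ₁ Θ₂) Λ)
  have hΛE : F.le Λ (F.sup (F.sup Θ₁ Θ₂) Λ) := F.le_sup_right (F.sup Θ₁ Θ₂) Λ
  have hAE : F.le (F.sup Θ₁ Λ) (F.sup (F.sup Θ₁ Θ₂) Λ) := F.sup_le hΘ₁E hΛE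
  have hBE : F.le (F.sup Θ₂ Λ) (F.sup (F.sup Θ₁ Θ₂) Λ) := F.sup_le hΘ₂E hΛE
  have hDE : F.le (F.sup (F.sup Θ₁ Λ) (F.sup Θ₂ Λ)) (F.sup (F.sup Θ₁ Θ₂) Λ) :=
    F.sup_le hAE hBE
  refine ⟨F.proj hDE z, ?_, ?_⟩
  · rw [← proj_comp (F.le_sup_left (F.sup Θ₁ Λ) (F.sup Θ₂ Λ)) hDE hAE z]
    apply proj_pair_eq (Θ := Θ₁) (Λ := Λ)
    · rw [← proj_comp (F.le_sup_left Θ₁ Λ) hAE hΘ₁E z, hz₁, hθ₁]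
    · rw [← proj_comp (F.le_sup_right Θ₁ Λ) hAE hΛE z, hzΛ, hlam]
  · rw [← proj_comp (F.le_sup_right (F.sup Θ₁ Λ) (F.sup Θ₂ Λ)) hDE hBE z]
    apply proj_pair_eq (Θ := Θ₂) (Λ := Λ)
    · rw [← proj_comp (F.le_sup_left Θ₂ Λ) hBE hΘ₂E z, hz₂, hθ₂]
    · rw [← proj_comp (F.le_sup_right Θ₂ Λ) hBE hΛE z, hzΛ]; exact hab

lemma transport_eq_sum {Θ Λ : F.Frame} (p : F.Pot Θ) (lam : F.El Λ)
    [DecidablePred fun θ : F.El Θ => F.compat θ lam] :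
    F.transport p Λ lam = ∑ θ ∈ Finset.univ.filter (fun θ : F.El Θ => F.compat θ lam), p θ := by
  rw [Finset.sum_filter]
  show (∑ᶠ (θ : F.El Θ) (_ : F.compat θ lam), p θ) = _
  rw [← finsum_eq_sum_of_fintype]
  exact finsum_congr fun θ => finsum_eq_if

/-- If `Θ₁ ⊥ Θ₂ | Λ` and `q₁`, `q₂` are potentials with
`d(q₁) = Θ₁ ∨ Λ`, `d(q₂) = Θ₂ ∨ Λ` (conditionally independent given `Λ`), then
(1) `π_{Θ₁∨Λ}(q₁·q₂) = q₁ · π_Λ(q₂)` and `π_{Θ₂∨Λ}(q₁·q₂) = q₂ · π_Λ(q₁)`;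
(2) `π_Λ(q₁·q₂) = π_Λ(q₁) · π_Λ(q₂)`. -/
theorem condIndep_potentials (F : FCF) (Θ₁ Θ₂ Λ : F.Frame)
    (hCI : F.CondIndep Θ₁ Θ₂ Λ)
    (q₁ : F.Pot (F.sup Θ₁ Λ)) (q₂ : F.Pot (F.sup Θ₂ Λ)) :
    (F.transport (F.combine q₁ q₂) (F.sup Θ₁ Λ) =
      fun x => q₁ x * F.transport q₂ Λ (F.proj (F.le_sup_right Θ₁ Λ) x)) ∧
    (F.transport (F.combine q₁ q₂) (F.sup Θ₂ Λ) =
      fun x => q₂ x * F.transport q₁ Λ (F.proj (F.le_sup_right Θ₂ Λ) x)) ∧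
    (F.transport (F.combine q₁ q₂) Λ =
      fun lam => F.transport q₁ Λ lam * F.transport q₂ Λ lam) := by
  classical
  have hAD := F.le_sup_left (F.sup Θ₁ Λ) (F.sup Θ₂ Λ)
  have hBD := F.le_sup_right (F.sup Θ₁ Λ) (F.sup Θ₂ Λ)
  have hΛA := F.le_sup_right Θ₁ Λ
  have hΛB := F.le_sup_right Θ₂ Λ
  have hΛD : F.le Λ (F.sup (F.sup Θ₁ Λ) (F.sup Θ₂ Λ)) := F.le_trans hΛA hAD
  refine ⟨?_, ?_, ?_⟩
  · funext a
    rw [transport_eq_sum, transport_eq_sum, Finset.mul_sum]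
    refine Finset.sum_bij (fun x _ => F.proj hBD x) ?_ ?_ ?_ ?_
    · intro x hx
      simp only [Finset.mem_filter, Finset.mem_univ, true_and] at hx ⊢
      rw [compat_of_le hAD] at hx
      rw [compat_of_le hΛB, ← proj_comp hΛB hBD hΛD x,
        proj_comp hΛA hAD hΛD x, hx]
    · intro x hx y hy hxy
      simp only [Finset.mem_filter, Finset.mem_univ, true_and] at hx hy
      rw [compat_of_le hAD] at hx hy
      exact proj_pair_eq (hx.trans hy.symm) hxy
    · intro b hb
      simp only [Finset.mem_filter, Finset.mem_univ, true_and] at hb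
      rw [compat_of_le hΛB] at hb
      obtain ⟨x, hx1, hx2⟩ := exists_sup_elem hCI a b (hb.symm ▸ rfl)
      refine ⟨x, ?_, hx2⟩
      simp only [Finset.mem_filter, Finset.mem_univ, true_and]
      rw [compat_of_le hAD]; exact hx1
    · intro x hx
      simp only [Finset.mem_filter, Finset.mem_univ, true_and] at hx
      rw [compat_of_le hAD] at hx
      show F.combine q₁ q₂ x = _
      unfold combine
      rw [hx]
  · funext b
    rw [transport_eq_sum, transport_eq_sum, Finset.mul_sum]
    refine Finset.sum_bij (fun x _ => F.proj hAD x) ?_ ?_ ?_ ?_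
    · intro x hx
      simp only [Finset.mem_filter, Finset.mem_univ, true_and] at hx ⊢
      rw [compat_of_le hBD] at hx
      rw [compat_of_le hΛA, ← proj_comp hΛA hAD hΛD x,
        proj_comp hΛB hBD hΛD x, hx]
    · intro x hx y hy hxy
      simp only [Finset.mem_filter, Finset.mem_univ, true_and] at hx hy
      rw [compat_of_le hBD] at hx hy
      exact proj_pair_eq hxy (hx.trans hy.symm)
    · intro a ha
      simp only [Finset.mem_filter, Finset.mem_univ, true_and] at ha
      rw [compat_of_le hΛA] at ha
      obtain ⟨x, hx1, hx2⟩ := exists_sup_elem hCI a b (ha.symm ▸ rfl)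
      refine ⟨x, ?_, hx1⟩
      simp only [Finset.mem_filter, Finset.mem_univ, true_and]
      rw [compat_of_le hBD]; exact hx2
    · intro x hx
      simp only [Finset.mem_filter, Finset.mem_univ, true_and] at hx
      rw [compat_of_le hBD] at hx
      show F.combine q₁ q₂ x = _
      unfold combine
      rw [hx, mul_comm]
  · funext lam
    rw [transport_eq_sum, transport_eq_sum, transport_eq_sum,
      Finset.sum_mul_sum, ← Finset.sum_product']
    refine Finset.sum_bij (fun x _ => (F.proj hAD x, F.proj hBD x)) ?_ ?_ ?_ ?_
    · intro x hx
      simp only [Finset.mem_filter, Finset.mem_univ, true_and, Finset.mem_product] at hx ⊢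
      rw [compat_of_le hΛD] at hx
      constructor
      · rw [compat_of_le hΛA, ← proj_comp hΛA hAD hΛD x, hx]
      · rw [compat_of_le hΛB, ← proj_comp hΛB hBD hΛD x, hx]
    · intro x hx y hy hxy
      exact proj_pair_eq (congrArg Prod.fst hxy) (congrArg Prod.snd hxy)
    · rintro ⟨a, b⟩ hab
      simp only [Finset.mem_filter, Finset.mem_univ, true_and, Finset.mem_product] at hab
      rw [compat_of_le hΛA] at hab
      rw [compat_of_le hΛB] at hab
      obtain ⟨x, hx1, hx2⟩ := exists_sup_elem hCI a b (hab.1.trans hab.2.symm)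
      refine ⟨x, ?_, by simp [hx1, hx2]⟩
      simp only [Finset.mem_filter, Finset.mem_univ, true_and]
      rw [compat_of_le hΛD, proj_comp hΛA hAD hΛD x, hx1, hab.1]
    · intro x hx
      show F.combine q₁ q₂ x = _
      unfold combine
      rfl

end FCF
end

section
/- Let Θ₁, Θ₂, Λ be frames of a family of compatible frames with Θ₁ ⊥ Θ₂ | Λ, and let p be a probability potential with d(p) = Θ₁ ∨ Θ₂ ∨ Λ. Then the following statements are all equivalent: (1) p = q₁ · q₂ for some potentials q₁, q₂ with d(q₁) = Θ₁ ∨ Λ and d(q₂) = Θ₂ ∨ Λ; (2) p = p_{Θ₁|Λ} · p_{Θ₂|Λ} · π_Λ(p); (3) p_{Θ₁∨Θ₂|Λ} = p_{Θ₁|Λ} · p_{Θ₂|Λ}; (4) p_{Θ₁∨Θ₂|Λ} = p₁ · p₂ for some potentials p₁, p₂ with d(p₁) = Θ₁ ∨ Λ and d(p₂) = Θ₂ ∨ Λ; (5) p · π_Λ(p) = π_{Θ₁∨Λ}(p) · π_{Θ₂∨Λ}(p); (6) p = p_{Θ₁|Λ} · π_{Θ₂∨Λ}(p); (7) p_{Θ₁|Θ₂∨Λ}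 = p_{Θ₁|Λ} · f_{π_{Θ₂∨Λ}(p)}; (8) p_{Θ₁|Θ₂∨Λ} = q · f_{π_{Θ₂∨Λ}(p)} for some potential q with d(q) = Θ₁ ∨ Λ. -/
open scoped NNReal

/-!
Conditional independence `Θ₁ ⊥ Θ₂ | Λ` says that `Θ₁ ∨ Θ₂ ∨ Λ` is the fibre product of
`Θ₁ ∨ Λ` and `Θ₂ ∨ Λ` over `Λ`. On a fibre product the marginals of a product
`q₁(a x) · q₂(b x)` are again products (`q₁ · Σ q₂`, `Σ q₁ · q₂` and `Σ q₁ · Σ q₂`), so any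
factorization of `p` gives `p · π_Λ(p) = π_{Θ₁∨Λ}(p) · π_{Θ₂∨Λ}(p)`. Every other equivalence is
pointwise algebra, because `p` vanishes wherever one of its marginals does, which makes the junk
value `0⁻¹ = 0` harmless.
-/

open Finset

theorem FCF.fpot_eq_mul_inv {X : Type} (p : X → ℝ≥0) (x : X) : fpot p x = p x * (p x)⁻¹ := by
  unfold fpot
  split_ifs with hx
  · rw [mul_inv_cancel₀ hx.ne']
  · simp [nonpos_iff_eq_zero.mp (not_lt.mp hx)]

section FiberProduct

variable {X A B L : Type} {M : Type*}

open Classical in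
noncomputable def fiberSum [Fintype X] [AddCommMonoid M] (f : X → A) (p : X → M) (y : A) : M :=
  ∑ x with f x = y, p x

theorem le_fiberSum [Fintype X] (f : X → A) (p : X → ℝ≥0) (x : X) :
    p x ≤ fiberSum f p (f x) :=
  single_le_sum (fun _ _ => zero_le) (by simp)

theorem fiberSum_apply_of_injective [Fintype X] [AddCommMonoid M] {f : X → A}
    (hf : f.Injective) (p : X → M) (x : X) : fiberSum f p (f x) = p x := by
  classical
  simp [fiberSum, sum_filter, hf.eq_iff]

structure IsFiberProduct (lA : A → L) (lB : B → L) (a : X → A) (b : X → B) (c : X → L) :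
    Prop where
  fst_comm : ∀ x, lA (a x) = c x
  snd_comm : ∀ x, lB (b x) = c x
  injective : ∀ x y, a x = a y → b x = b y → x = y
  exists_eq : ∀ α β, lA α = lB β → ∃ x, a x = α ∧ b x = β

namespace IsFiberProduct

variable {lA : A → L} {lB : B → L} {a : X → A} {b : X → B} {c : X → L}

theorem symm (hX : IsFiberProduct lA lB a b c) : IsFiberProduct lB lA b a c where
  fst_comm := hX.snd_comm
  snd_comm := hX.fst_comm
  injective x y hb ha := hX.injective x y ha hb
  exists_eq β α h := (hX.exists_eq α β h.symm).imp fun _ => And.symm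

variable [Fintype X] [Fintype A] [Fintype B]

theorem sum_eq [DecidableEq L] [AddCommMonoid M] (hX : IsFiberProduct lA lB a b c)
    (h : A → B → M) : ∑ x, h (a x) (b x) = ∑ α, ∑ β with lB β = lA α, h α β := by
  simp only [sum_filter]
  rw [← Fintype.sum_prod_type', ← sum_filter]
  refine sum_bij (fun x _ => (a x, b x)) (fun x _ => ?_) (fun x _ y _ hxy => ?_)
    (fun q hq => ?_) (fun _ _ => rfl)
  · simp [hX.fst_comm, hX.snd_comm]
  · simp only [Prod.mk.injEq] at hxy
    exact hX.injective x y hxy.1 hxy.2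
  · obtain ⟨x, hxa, hxb⟩ := hX.exists_eq q.1 q.2 (mem_filter.mp hq).2.symm
    exact ⟨x, mem_univ x, by simp [hxa, hxb]⟩

section CommSemiring

variable [CommSemiring M]

theorem fiberSum_fst_mul (hX : IsFiberProduct lA lB a b c) (f : A → M) (g : B → M) (α : A) :
    fiberSum a (fun x => f (a x) * g (b x)) α = f α * fiberSum lB g (lA α) := by
  classical
  simp only [fiberSum, sum_filter]
  rw [hX.sum_eq (fun α' β => if α' = α then f α' * g β else 0)]
  simp [mul_sum, sum_filter]

theorem fiberSum_snd_mul (hX : IsFiberProduct lA lB a b c) (f : A → M) (g : B → M) (β : B) :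
    fiberSum b (fun x => f (a x) * g (b x)) β = fiberSum lA f (lB β) * g β := by
  simpa only [mul_comm] using hX.symm.fiberSum_fst_mul g f β

theorem fiberSum_mul (hX : IsFiberProduct lA lB a b c) (f : A → M) (g : B → M) (t : L) :
    fiberSum c (fun x => f (a x) * g (b x)) t = fiberSum lA f t * fiberSum lB g t := by
  classical
  simp only [fiberSum, sum_filter, ← hX.fst_comm]
  rw [hX.sum_eq (fun α β => if lA α = t then f α * g β else 0), sum_mul]
  refine sum_congr rfl fun α _ => ?_
  split_ifs with hα
  · simp [hα, mul_sum, sum_filter]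
  · simp

end CommSemiring

theorem tfae (hX : IsFiberProduct lA lB a b c) (p : X → ℝ≥0) {P : A → ℝ≥0} {Q : B → ℝ≥0}
    {N : L → ℝ≥0} (hP : P = fiberSum a p) (hQ : Q = fiberSum b p) (hN : N = fiberSum c p) :
    List.TFAE
      [ ∃ (q₁ : A → ℝ≥0) (q₂ : B → ℝ≥0), ∀ x, p x = q₁ (a x) * q₂ (b x),
        ∀ x, p x = P (a x) * (N (lA (a x)))⁻¹ * (Q (b x) * (N (lB (b x)))⁻¹) * N (c x),
        ∀ x, p x * (N (c x))⁻¹ = P (a x) * (N (lA (a x)))⁻¹ * (Q (b x) * (N (lB (b x)))⁻¹),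
        ∃ (p₁ : A → ℝ≥0) (p₂ : B → ℝ≥0), ∀ x, p x * (N (c x))⁻¹ = p₁ (a x) * p₂ (b x),
        ∀ x, p x * N (c x) = P (a x) * Q (b x),
        ∀ x, p x = P (a x) * (N (lA (a x)))⁻¹ * Q (b x),
        ∀ x, p x * (Q (b x))⁻¹ = P (a x) * (N (lA (a x)))⁻¹ * FCF.fpot Q (b x),
        ∃ q : A → ℝ≥0, ∀ x, p x * (Q (b x))⁻¹ = q (a x) * FCF.fpot Q (b x) ] := by
  have hpN (x : X) : N (c x) = 0 → p x = 0 := fun h =>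
    le_zero_iff.mp (h ▸ hN ▸ le_fiberSum c p x)
  have hpQ (x : X) : Q (b x) = 0 → p x = 0 := fun h =>
    le_zero_iff.mp (h ▸ hQ ▸ le_fiberSum b p x)
  tfae_have 1 → 5 := by
    rintro ⟨q₁, q₂, hq⟩ x
    obtain rfl : p = fun x => q₁ (a x) * q₂ (b x) := funext hq
    subst hP hQ hN
    rw [hX.fiberSum_fst_mul, hX.fiberSum_snd_mul, hX.fiberSum_mul, hX.fst_comm, hX.snd_comm]
    ring
  tfae_have 5 → 6 := fun h x => calc
    p x = p x * N (c x) / N (c x) := (mul_div_cancel_of_imp (hpN x)).symm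
    _ = _ := by rw [h x, div_eq_mul_inv, hX.fst_comm]; ring
  tfae_have 6 → 2 := fun h x => calc
    p x = p x / N (c x) * N (c x) := (div_mul_cancel_of_imp (hpN x)).symm
    _ = _ := by rw [div_eq_mul_inv, h x, hX.snd_comm]; ring
  tfae_have 2 → 3 := fun h x => by
    rw [h x, hX.fst_comm, hX.snd_comm]
    rcases eq_or_ne (N (c x)) 0 with h0 | h0 <;> simp [h0]
  tfae_have 3 → 4 := fun h => ⟨fun α => P α * (N (lA α))⁻¹, fun β => Q β * (N (lB β))⁻¹, h⟩
  tfae_have 4 → 1 := by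
    rintro ⟨p₁, p₂, h⟩
    refine ⟨p₁, fun β => p₂ β * N (lB β), fun x => ?_⟩
    dsimp only
    rw [hX.snd_comm x, ← mul_assoc, ← h x, ← div_eq_mul_inv, div_mul_cancel_of_imp (hpN x)]
  tfae_have 6 → 7 := fun h x => by rw [h x, FCF.fpot_eq_mul_inv]; ring
  tfae_have 7 → 8 := fun h => ⟨fun α => P α * (N (lA α))⁻¹, h⟩
  tfae_have 8 → 1 := by
    rintro ⟨q, h⟩
    refine ⟨q, Q, fun x => ?_⟩
    rw [← div_mul_cancel_of_imp (hpQ x), div_eq_mul_inv, h x, FCF.fpot_eq_mul_inv, mul_assoc,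
      mul_inv_mul_cancel]
  tfae_finish

end IsFiberProduct

end FiberProduct

namespace FCF

section

variable {F : FCF}

theorem mem_tau_proj {Λ Θ : F.Frame} (h : F.le Λ Θ) (x : F.El Θ) : x ∈ F.τ h (F.proj h x) :=
  (F.τ_cover h x).choose_spec

theorem proj_eq_of_mem {Λ Θ : F.Frame} (h : F.le Λ Θ) {lam : F.El Λ} {x : F.El Θ}
    (hx : x ∈ F.τ h lam) : F.proj h x = lam := by
  by_contra hne
  have hx' : x ∈ F.τ h (F.proj h x) ∩ F.τ h lam := ⟨mem_tau_proj h x, hx⟩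
  rwa [F.τ_disjoint h _ _ hne] at hx'

theorem proj_refl {Θ : F.Frame} (h : F.le Θ Θ) (x : F.El Θ) : F.proj h x = x :=
  proj_eq_of_mem h (by rw [F.τ_refl h x]; rfl)

@[simp]
theorem proj_proj {Θ Λ Ξ : F.Frame} (h₁ : F.le Θ Λ) (h₂ : F.le Λ Ξ) (x : F.El Ξ) :
    F.proj h₁ (F.proj h₂ x) = F.proj (F.le_trans h₁ h₂) x := by
  refine (proj_eq_of_mem _ ?_).symm
  rw [F.τ_comp h₁ h₂]
  exact Set.mem_biUnion (mem_tau_proj h₁ _) (mem_tau_proj h₂ x)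

theorem proj_leftInverse {Λ Θ : F.Frame} (h : F.le Λ Θ) (h' : F.le Θ Λ) :
    Function.LeftInverse (F.proj h) (F.proj h') := fun x => by
  rw [proj_proj, proj_refl]

theorem sup_ext {Θ Λ : F.Frame} {x y : F.El (F.sup Θ Λ)}
    (hΘ : F.proj (F.le_sup_left Θ Λ) x = F.proj (F.le_sup_left Θ Λ) y)
    (hΛ : F.proj (F.le_sup_right Θ Λ) x = F.proj (F.le_sup_right Θ Λ) y) : x = y := by
  obtain ⟨θ, lam, hx⟩ := F.sup_atom (F.le_sup_left Θ Λ) (F.le_sup_right Θ Λ) x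
  have hxθ : F.proj (F.le_sup_left Θ Λ) x = θ := proj_eq_of_mem _ (hx.ge rfl).1
  have hxlam : F.proj (F.le_sup_right Θ Λ) x = lam := proj_eq_of_mem _ (hx.ge rfl).2
  have hy : y ∈ F.τ (F.le_sup_left Θ Λ) θ ∩ F.τ (F.le_sup_right Θ Λ) lam :=
    ⟨hxθ ▸ hΘ ▸ mem_tau_proj _ y, hxlam ▸ hΛ ▸ mem_tau_proj _ y⟩
  rw [hx] at hy
  exact hy.symm

theorem compat_proj_proj {Θ Λ : F.Frame} (x : F.El (F.sup Θ Λ)) :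
    F.compat (F.proj (F.le_sup_left Θ Λ) x) (F.proj (F.le_sup_right Θ Λ) x) :=
  ⟨x, mem_tau_proj _ x, mem_tau_proj _ x⟩

theorem compat_iff {Θ Λ : F.Frame} (h : F.le Λ Θ) (θ : F.El Θ) (lam : F.El Λ) :
    F.compat θ lam ↔ F.proj h θ = lam := by
  constructor
  · rintro ⟨x, hxθ, hxlam⟩
    rw [← proj_eq_of_mem _ hxθ, proj_proj]
    exact proj_eq_of_mem _ hxlam
  · rintro rfl
    obtain ⟨x, hxθ⟩ := F.τ_nonempty (F.le_sup_left Θ Λ) θ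
    have hx : F.proj (F.le_sup_right Θ Λ) x = F.proj h θ := by
      rw [← proj_eq_of_mem _ hxθ, proj_proj]
    exact ⟨x, hxθ, hx ▸ mem_tau_proj _ x⟩

theorem transport_eq_fiberSum {Θ Λ : F.Frame} (p : F.Pot Θ) (h : F.le Λ Θ) :
    F.transport p Λ = fiberSum (F.proj h) p := by
  classical
  funext lam
  exact finsum_cond_eq_sum_of_cond_iff p fun {θ} _ => by simp [compat_iff h]

theorem transport_proj_of_le {Θ Λ : F.Frame} (p : F.Pot Θ) (h : F.le Λ Θ) (h' : F.le Θ Λ)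
    (x : F.El Θ) : F.transport p Λ (F.proj h x) = p x := by
  rw [transport_eq_fiberSum p h]
  exact fiberSum_apply_of_injective (proj_leftInverse h' h).injective p x

theorem condl2_eq_iff {Δ Θ Λ : F.Frame} (p : F.Pot Δ) (h : F.le (F.sup Θ Λ) Δ)
    (h' : F.le Δ (F.sup Θ Λ)) (hΛ : F.le Λ Δ) (g : F.Pot (F.sup Θ Λ)) :
    F.condl2 p Θ Λ = g ↔ ∀ x, p x * (F.transport p Λ (F.proj hΛ x))⁻¹ = g (F.proj h x) := by
  rw [funext_iff, (proj_leftInverse h h').surjective.forall]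
  simp only [condl2, transport_proj_of_le p h h', proj_proj]

theorem isFiberProduct_of_condIndep {Θ₁ Θ₂ Λ : F.Frame} (hCI : F.CondIndep Θ₁ Θ₂ Λ)
    (hAJ : F.le (F.sup Θ₁ Λ) (F.sup (F.sup Θ₁ Θ₂) Λ))
    (hBJ : F.le (F.sup Θ₂ Λ) (F.sup (F.sup Θ₁ Θ₂) Λ))
    (hΛJ : F.le Λ (F.sup (F.sup Θ₁ Θ₂) Λ)) :
    IsFiberProduct (F.proj (F.le_sup_right Θ₁ Λ)) (F.proj (F.le_sup_right Θ₂ Λ))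
      (F.proj hAJ) (F.proj hBJ) (F.proj hΛJ) where
  fst_comm x := proj_proj _ _ x
  snd_comm x := proj_proj _ _ x
  injective x y hA hB := by
    have hΘ₁ := congrArg (F.proj (F.le_sup_left Θ₁ Λ)) hA
    have hΘ₂ := congrArg (F.proj (F.le_sup_left Θ₂ Λ)) hB
    have hΛ := congrArg (F.proj (F.le_sup_right Θ₁ Λ)) hA
    simp only [proj_proj] at hΘ₁ hΘ₂ hΛ
    refine sup_ext (sup_ext ?_ ?_) hΛ <;> simp only [proj_proj]
    exacts [hΘ₁, hΘ₂]
  exists_eq α β hαβ := by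
    have hβ := compat_proj_proj β
    rw [← hαβ] at hβ
    obtain ⟨x, ⟨hxθ₁, hxθ₂⟩, hxlam⟩ := (hCI _ _ _).2 ⟨compat_proj_proj α, hβ⟩
    refine ⟨x, sup_ext ?_ ?_, sup_ext ?_ ?_⟩ <;> simp only [proj_proj]
    exacts [proj_eq_of_mem _ hxθ₁, proj_eq_of_mem _ hxlam, proj_eq_of_mem _ hxθ₂,
      hαβ ▸ proj_eq_of_mem _ hxlam]

end

/-- Equivalent characterizations of a factorization of a potential
`p` with `d(p) = Θ₁ ∨ Θ₂ ∨ Λ` over conditionally independent frames `Θ₁ ⊥ Θ₂ | Λ`. -/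
theorem factorization_tfae (F : FCF) (Θ₁ Θ₂ Λ : F.Frame)
    (hCI : F.CondIndep Θ₁ Θ₂ Λ)
    (p : F.Pot (F.sup (F.sup Θ₁ Θ₂) Λ))
    (hΛJ : F.le Λ (F.sup (F.sup Θ₁ Θ₂) Λ))
    (hAJ : F.le (F.sup Θ₁ Λ) (F.sup (F.sup Θ₁ Θ₂) Λ))
    (hBJ : F.le (F.sup Θ₂ Λ) (F.sup (F.sup Θ₁ Θ₂) Λ))
    (hAC : F.le (F.sup Θ₁ Λ) (F.sup Θ₁ (F.sup Θ₂ Λ)))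
    (hBC : F.le (F.sup Θ₂ Λ) (F.sup Θ₁ (F.sup Θ₂ Λ))) :
    List.TFAE
      [ -- (1) p = q₁ · q₂
        (∃ (q₁ : F.Pot (F.sup Θ₁ Λ)) (q₂ : F.Pot (F.sup Θ₂ Λ)),
          p = fun x => q₁ (F.proj hAJ x) * q₂ (F.proj hBJ x)),
        -- (2) p = p_{Θ₁|Λ} · p_{Θ₂|Λ} · π_Λ(p)
        (p = fun x => F.condl2 p Θ₁ Λ (F.proj hAJ x) *
            F.condl2 p Θ₂ Λ (F.proj hBJ x) * F.transport p Λ (F.proj hΛJ x)),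
        -- (3) p_{Θ₁∨Θ₂|Λ} = p_{Θ₁|Λ} · p_{Θ₂|Λ}
        (F.condl2 p (F.sup Θ₁ Θ₂) Λ =
          fun x => F.condl2 p Θ₁ Λ (F.proj hAJ x) * F.condl2 p Θ₂ Λ (F.proj hBJ x)),
        -- (4) p_{Θ₁∨Θ₂|Λ} = p₁ · p₂
        (∃ (p₁ : F.Pot (F.sup Θ₁ Λ)) (p₂ : F.Pot (F.sup Θ₂ Λ)),
          F.condl2 p (F.sup Θ₁ Θ₂) Λ =
            fun x => p₁ (F.proj hAJ x) * p₂ (F.proj hBJ x)),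
        -- (5) p · π_Λ(p) = π_{Θ₁∨Λ}(p) · π_{Θ₂∨Λ}(p)
        ((fun x => p x * F.transport p Λ (F.proj hΛJ x)) =
          fun x => F.transport p (F.sup Θ₁ Λ) (F.proj hAJ x) *
            F.transport p (F.sup Θ₂ Λ) (F.proj hBJ x)),
        -- (6) p = p_{Θ₁|Λ} · π_{Θ₂∨Λ}(p)
        (p = fun x => F.condl2 p Θ₁ Λ (F.proj hAJ x) *
            F.transport p (F.sup Θ₂ Λ) (F.proj hBJ x)),
        -- (7) p_{Θ₁|Θ₂∨Λ} = p_{Θ₁|Λ} · f_{π_{Θ₂∨Λ}(p)}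
        (F.condl2 p Θ₁ (F.sup Θ₂ Λ) =
          fun y => F.condl2 p Θ₁ Λ (F.proj hAC y) *
            fpot (F.transport p (F.sup Θ₂ Λ)) (F.proj hBC y)),
        -- (8) p_{Θ₁|Θ₂∨Λ} = q · f_{π_{Θ₂∨Λ}(p)}
        (∃ q : F.Pot (F.sup Θ₁ Λ),
          F.condl2 p Θ₁ (F.sup Θ₂ Λ) =
            fun y => q (F.proj hAC y) *
              fpot (F.transport p (F.sup Θ₂ Λ)) (F.proj hBC y)) ] := by
  have hCJ : F.le (F.sup Θ₁ (F.sup Θ₂ Λ)) (F.sup (F.sup Θ₁ Θ₂) Λ) := (sup_assoc Θ₁ Θ₂ Λ).ge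
  have hJC : F.le (F.sup (F.sup Θ₁ Θ₂) Λ) (F.sup Θ₁ (F.sup Θ₂ Λ)) := (sup_assoc Θ₁ Θ₂ Λ).le
  have key := (isFiberProduct_of_condIndep hCI hAJ hBJ hΛJ).tfae p
    (transport_eq_fiberSum p hAJ) (transport_eq_fiberSum p hBJ) (transport_eq_fiberSum p hΛJ)
  simpa only [condl2_eq_iff p hCJ hJC hBJ, condl2_eq_iff p (F.le_refl _) (F.le_refl _) hΛJ,
    funext_iff, condl2, proj_proj, proj_refl] using key

end FCF
end

section
/- Let Θ, Λ, Λ₁ be frames of a family of compatible frames with Θ ⊥ Λ | Λ₁, and let p be a probability potential with d(p) = Θ. Then for every λ ∈ Λ: max_{θ∈Θ : θ∼λ} p(θ) = max_{λ₁∈Λ₁ : λ₁∼λ} ( max_{θ∈Θ : θ∼λ₁} p(θ) ). In other words, the max-transport satisfies t^max_Λ(p) = t^max_Λ(t^max_{Λ₁}(p)). -/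
open scoped NNReal

/-!
Conditional independence `Θ ⊥ Λ | Λ₁` says exactly that `θ ∼ λ` holds iff some `λ₁ ∈ Λ₁` is
compatible with both `θ` and `λ`. Hence the nested maximum over `λ₁ ∼ λ` and `θ ∼ λ₁` ranges
over the same values `p θ` as the maximum over `θ ∼ λ`.
-/

section ciSup

variable {ι κ α : Type*} [ConditionallyCompleteLinearOrderBot α]

theorem le_ciSup₂_of_finite [Finite ι] {P : ι → Prop} (f : ι → α) {i : ι} (hi : P i) :
    f i ≤ ⨆ (j) (_ : P j), f j :=
  le_ciSup₂ (f := fun j (_ : P j) => f j)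
    (Set.finite_iUnion fun _ => Set.finite_range _).bddAbove i hi

theorem ciSup₂_eq_ciSup₂_ciSup₂_of_iff_exists [Finite ι] [Finite κ] {P : ι → Prop}
    {R : κ → Prop} {S : ι → κ → Prop} (hP : ∀ i, P i ↔ ∃ k, R k ∧ S i k) (f : ι → α) :
    ⨆ (i) (_ : P i), f i = ⨆ (k) (_ : R k), ⨆ (i) (_ : S i k), f i := by
  apply le_antisymm
  · refine ciSup_le' fun i => ciSup_le' fun hi => ?_
    obtain ⟨k, hk, hik⟩ := (hP i).1 hi
    exact (le_ciSup₂_of_finite f hik).trans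
      (le_ciSup₂_of_finite (fun k => ⨆ (i) (_ : S i k), f i) hk)
  · exact ciSup_le' fun k => ciSup_le' fun hk => ciSup_le' fun i => ciSup_le' fun hik =>
      le_ciSup₂_of_finite f ((hP i).2 ⟨k, hk, hik⟩)

end ciSup

namespace FCF

variable (F : FCF) {Θ Λ Ξ : F.Frame}

theorem mem_τ_iff_exists (h₁ : F.le Θ Λ) (h₂ : F.le Λ Ξ) (h₃ : F.le Θ Ξ) {θ : F.El Θ}
    {x : F.El Ξ} : x ∈ F.τ h₃ θ ↔ ∃ y ∈ F.τ h₁ θ, x ∈ F.τ h₂ y := by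
  rw [F.τ_comp h₁ h₂ h₃, Set.mem_iUnion₂]
  simp only [exists_prop]

theorem eq_of_mem_τ (h : F.le Θ Λ) {θ θ' : F.El Θ} {x : F.El Λ} (hx : x ∈ F.τ h θ)
    (hx' : x ∈ F.τ h θ') : θ = θ' := by
  by_contra hne
  exact Set.eq_empty_iff_forall_notMem.1 (F.τ_disjoint h θ θ' hne) x ⟨hx, hx'⟩

theorem compat_of_mem_τ {θ : F.El Θ} {lam : F.El Λ} (h₁ : F.le Θ Ξ) (h₂ : F.le Λ Ξ)
    {x : F.El Ξ} (hx₁ : x ∈ F.τ h₁ θ) (hx₂ : x ∈ F.τ h₂ lam) : F.compat θ lam := by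
  have hΞ : F.le (F.sup Θ Λ) Ξ := F.sup_le h₁ h₂
  obtain ⟨y, hyθ, hxy⟩ := (F.mem_τ_iff_exists (F.le_sup_left Θ Λ) hΞ h₁).1 hx₁
  obtain ⟨z, hzlam, hxz⟩ := (F.mem_τ_iff_exists (F.le_sup_right Θ Λ) hΞ h₂).1 hx₂
  exact ⟨y, hyθ, F.eq_of_mem_τ hΞ hxy hxz ▸ hzlam⟩

variable {F}

theorem compat.symm {θ : F.El Θ} {lam : F.El Λ} (h : F.compat θ lam) : F.compat lam θ :=
  let ⟨_, hxθ, hxlam⟩ := h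
  F.compat_of_mem_τ _ _ hxlam hxθ

theorem CondIndep.compat_iff_exists (hCI : F.CondIndep Θ Λ Ξ) (θ : F.El Θ) (lam : F.El Λ) :
    F.compat θ lam ↔ ∃ ξ : F.El Ξ, F.compat ξ lam ∧ F.compat θ ξ := by
  constructor
  · rintro ⟨x, hxθ, hxlam⟩
    have hl : F.le (F.sup Θ Λ) (F.sup (F.sup Θ Λ) Ξ) := F.le_sup_left _ _
    obtain ⟨z, hz⟩ := F.τ_nonempty hl x
    obtain ⟨ξ, hzξ⟩ := F.τ_cover (F.le_sup_right (F.sup Θ Λ) Ξ) z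
    have h3 : F.compat3 θ lam ξ :=
      ⟨z, ⟨(F.mem_τ_iff_exists _ hl _).2 ⟨x, hxθ, hz⟩,
        (F.mem_τ_iff_exists _ hl _).2 ⟨x, hxlam, hz⟩⟩, hzξ⟩
    obtain ⟨hθξ, hlamξ⟩ := (hCI ξ θ lam).1 h3
    exact ⟨ξ, hlamξ.symm, hθξ⟩
  · rintro ⟨ξ, hξlam, hθξ⟩
    obtain ⟨z, ⟨hzθ, hzlam⟩, -⟩ := (hCI ξ θ lam).2 ⟨hθξ, hξlam.symm⟩
    exact F.compat_of_mem_τ _ _ hzθ hzlam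

/-- (Transport axiom for the max/product algebra.) If `Θ ⊥ Λ | Λ₁`
and `d(p) = Θ`, then `max_{θ∼λ} p(θ) = max_{λ₁∼λ} max_{θ∼λ₁} p(θ)` for every `λ ∈ Λ`,
i.e. `t^max_Λ(p) = t^max_Λ(t^max_{Λ₁}(p))`. -/
theorem maxTransport_maxTransport (F : FCF) (Θ Λ Λ₁ : F.Frame)
    (hCI : F.CondIndep Θ Λ Λ₁) (p : F.Pot Θ) :
    (∀ lam : F.El Λ,
      (⨆ (θ : F.El Θ) (_ : F.compat θ lam), p θ) =
        ⨆ (lam1 : F.El Λ₁) (_ : F.compat lam1 lam),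
          ⨆ (θ : F.El Θ) (_ : F.compat θ lam1), p θ) ∧
    F.maxTransport p Λ = F.maxTransport (F.maxTransport p Λ₁) Λ := by
  have pointwise : ∀ lam : F.El Λ,
      F.maxTransport p Λ lam = F.maxTransport (F.maxTransport p Λ₁) Λ lam := fun lam =>
    ciSup₂_eq_ciSup₂_ciSup₂_of_iff_exists (fun θ => hCI.compat_iff_exists θ lam) p
  exact ⟨pointwise, funext pointwise⟩

end FCF
end
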